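/- For an FAW attacker who uses τ₀ = argmax_τ R_a(τ, 0) (the BWH-optimal infiltration fraction), her FAW reward satisfies R_a(τ₀, c) = max_τ R_a(τ,0) + c·τ₀α·((1-α-β)/(1-τ₀α))·(τ₀α/(β+τ₀α)), which is at least the maximal BWH reward for any c ≥ 0. -/

import Mathlib

/-- The paper's `R_a(τ, c)`; the BWH reward below is `R_a(τ, 0)`. -/
noncomputable def fawReward (α β τ c : ℝ) : ℝ :=
  (1 - τ) * α / (1 - τ * α)
    + (β / (1 - τ * α) + c * (τ * α) * (1 - α - β) / (1 - τ * α)) * (τ * α / (β + τ * α))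

noncomputable def bwhReward (α β τ : ℝ) : ℝ :=
  (1 - τ) * α / (1 - τ * α) + (β / (1 - τ * α)) * (τ * α / (β + τ * α))

noncomputable def fawBonus (α β τ c : ℝ) : ℝ :=
  c * (τ * α) * ((1 - α - β) / (1 - τ * α)) * (τ * α / (β + τ * α))

theorem fawReward_eq_bwhReward_add_fawBonus (α β τ c : ℝ) :
    fawReward α β τ c = bwhReward α β τ + fawBonus α β τ c := by
  unfold fawReward bwhReward fawBonus
  ring

theorem fawBonus_nonneg {α β τ c : ℝ} (hα : 0 ≤ α) (hβ : 0 ≤ β) (hαβ : α + β ≤ 1)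
    (hτ₀ : 0 ≤ τ) (hτ₁ : τ ≤ 1) (hc : 0 ≤ c) : 0 ≤ fawBonus α β τ c := by
  have hτα : 0 ≤ τ * α := mul_nonneg hτ₀ hα
  have hτα₁ : τ * α ≤ 1 := mul_le_one₀ hτ₁ hα (by linarith)
  unfold fawBonus
  exact mul_nonneg (mul_nonneg (mul_nonneg hc hτα) (div_nonneg (by linarith) (by linarith)))
    (div_nonneg hτα (by linarith))

theorem bwhReward_le_fawReward {α β τ c : ℝ} (hα : 0 ≤ α) (hβ : 0 ≤ β) (hαβ : α + β ≤ 1)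
    (hτ₀ : 0 ≤ τ) (hτ₁ : τ ≤ 1) (hc : 0 ≤ c) : bwhReward α β τ ≤ fawReward α β τ c := by
  rw [fawReward_eq_bwhReward_add_fawBonus]
  exact le_add_of_nonneg_right (fawBonus_nonneg hα hβ hαβ hτ₀ hτ₁ hc)

theorem faw_reward_at_bwh_optimum_general (α β τ₀ c : ℝ)
    (hα : 0 < α) (hβ : 0 < β) (hαβ : α + β < 1)
    (hτ₀ : τ₀ ∈ Set.Ico (0 : ℝ) 1) (hc : 0 ≤ c) :
    ((1 - τ₀) * α / (1 - τ₀ * α)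
      + (β / (1 - τ₀ * α) + c * (τ₀ * α) * (1 - α - β) / (1 - τ₀ * α)) * (τ₀ * α / (β + τ₀ * α))
      = ((1 - τ₀) * α / (1 - τ₀ * α) + (β / (1 - τ₀ * α)) * (τ₀ * α / (β + τ₀ * α)))
        + c * (τ₀ * α) * ((1 - α - β) / (1 - τ₀ * α)) * (τ₀ * α / (β + τ₀ * α)))
    ∧ ((1 - τ₀) * α / (1 - τ₀ * α) + (β / (1 - τ₀ * α)) * (τ₀ * α / (β + τ₀ * α))
      ≤ (1 - τ₀) * α / (1 - τ₀ * α)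
        + (β / (1 - τ₀ * α) + c * (τ₀ * α) * (1 - α - β) / (1 - τ₀ * α))
          * (τ₀ * α / (β + τ₀ * α))) :=
  ⟨fawReward_eq_bwhReward_add_fawBonus α β τ₀ c,
    bwhReward_le_fawReward hα.le hβ.le hαβ.le hτ₀.1 hτ₀.2.le hc⟩

theorem faw_reward_at_bwh_optimum (α β τ₀ c : ℝ)
    (hα : 0 < α) (hβ : 0 < β) (hαβ : α + β < 1)
    (hτ₀ : τ₀ ∈ Set.Ico (0 : ℝ) 1) (hc : 0 ≤ c) (hc1 : c ≤ 1)
    -- τ₀ is the argmax of the BWH reward R_a(τ, 0) on [0,1)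
    (hargmax : ∀ τ ∈ Set.Ico (0 : ℝ) 1,
      (1 - τ) * α / (1 - τ * α) + (β / (1 - τ * α)) * (τ * α / (β + τ * α))
      ≤ (1 - τ₀) * α / (1 - τ₀ * α) + (β / (1 - τ₀ * α)) * (τ₀ * α / (β + τ₀ * α))) :
    ((1 - τ₀) * α / (1 - τ₀ * α)
      + (β / (1 - τ₀ * α) + c * (τ₀ * α) * (1 - α - β) / (1 - τ₀ * α)) * (τ₀ * α / (β + τ₀ * α))
      = ((1 - τ₀) * α / (1 - τ₀ * α) + (β / (1 - τ₀ * α)) * (τ₀ * α / (β + τ₀ * α)))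
        + c * (τ₀ * α) * ((1 - α - β) / (1 - τ₀ * α)) * (τ₀ * α / (β + τ₀ * α)))
    ∧ ((1 - τ₀) * α / (1 - τ₀ * α) + (β / (1 - τ₀ * α)) * (τ₀ * α / (β + τ₀ * α))
      ≤ (1 - τ₀) * α / (1 - τ₀ * α)
        + (β / (1 - τ₀ * α) + c * (τ₀ * α) * (1 - α - β) / (1 - τ₀ * α))
          * (τ₀ * α / (β + τ₀ * α))) :=
  faw_reward_at_bwh_optimum_general α β τ₀ c hα hβ hαβ hτ₀ hc
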